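/- arXiv:1212.6690 — 2 statements merged into one kernel-verified Lean document; each statement's English description precedes it below -/
import Mathlib

section
/- In the structural ME system of order 3, the error variance σ_2^2 of the second instrument satisfies σ_2^2 = Var(Y) − Cov(X,Y)·Cov(Y,Z)/Cov(X,Z), and σ_3^2 = Var(Z) − Cov(Y,Z)·Cov(X,Z)/Cov(X,Y), provided β_2, β_3 ≠ 0 and Var(μ) > 0. -/
/-!
Each observed variable is an affine function of the latent `μ` plus an error independent of `μ`
and of the other errors, so by bilinearity of covariance
`Cov(X,Y) = β₂ Δ`, `Cov(X,Z) = β₃ Δ`, `Cov(Y,Z) = β₂ β₃ Δ`, `Var Y = β₂² Δ + σ₂²`,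
`Var Z = β₃² Δ + σ₃²`; the two identities are then algebra.
-/

open MeasureTheory ProbabilityTheory

namespace ProbabilityTheory

variable {Ω : Type*} {mΩ : MeasurableSpace Ω} {μ : Measure Ω} [IsProbabilityMeasure μ]
  {f ε η : Ω → ℝ}

lemma _root_.MeasureTheory.MemLp.const_add_mul_add (a b : ℝ) (hf : MemLp f 2 μ) (hε : MemLp ε 2 μ) :
    MemLp (fun ω ↦ a + b * f ω + ε ω) 2 μ :=
  ((memLp_const a).add (hf.const_mul b)).add hε

lemma covariance_const_add_mul_add (a b c d : ℝ)
    (hf : MemLp f 2 μ) (hε : MemLp ε 2 μ) (hη : MemLp η 2 μ)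
    (hfε : f ⟂ᵢ[μ] ε) (hfη : f ⟂ᵢ[μ] η) :
    cov[fun ω ↦ a + b * f ω + ε ω, fun ω ↦ c + d * f ω + η ω; μ]
      = b * d * Var[f; μ] + cov[ε, η; μ] := by
  have hbf : MemLp (b • f) 2 μ := hf.const_smul b
  have hdf : MemLp (d • f) 2 μ := hf.const_smul d
  have hU : (fun ω ↦ a + b * f ω + ε ω) = fun ω ↦ a + (b • f + ε) ω := by
    ext ω; simp [add_assoc]
  have hV : (fun ω ↦ c + d * f ω + η ω) = fun ω ↦ c + (d • f + η) ω := by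
    ext ω; simp [add_assoc]
  rw [hU, hV, covariance_const_add_left ((hbf.add hε).integrable one_le_two),
    covariance_const_add_right ((hdf.add hη).integrable one_le_two),
    covariance_add_left hbf hε (hdf.add hη), covariance_add_right hbf hdf hη,
    covariance_add_right hε hdf hη, covariance_smul_left, covariance_smul_right,
    covariance_smul_left, covariance_smul_right, covariance_self hf.aemeasurable,
    hfη.covariance_eq_zero hf hη, covariance_comm ε, hfε.covariance_eq_zero hf hε]
  ring

lemma covariance_const_add_mul_add_of_indepFun (a b c d : ℝ)
    (hf : MemLp f 2 μ) (hε : MemLp ε 2 μ) (hη : MemLp η 2 μ)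
    (hfε : f ⟂ᵢ[μ] ε) (hfη : f ⟂ᵢ[μ] η) (hεη : ε ⟂ᵢ[μ] η) :
    cov[fun ω ↦ a + b * f ω + ε ω, fun ω ↦ c + d * f ω + η ω; μ] = b * d * Var[f; μ] := by
  rw [covariance_const_add_mul_add a b c d hf hε hη hfε hfη, hεη.covariance_eq_zero hε hη,
    add_zero]

lemma variance_const_add_mul_add (a b : ℝ) (hf : MemLp f 2 μ) (hε : MemLp ε 2 μ)
    (hfε : f ⟂ᵢ[μ] ε) :
    Var[fun ω ↦ a + b * f ω + ε ω; μ] = b ^ 2 * Var[f; μ] + Var[ε; μ] := by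
  rw [← covariance_self (hf.const_add_mul_add a b hε).aemeasurable,
    covariance_const_add_mul_add a b a b hf hε hε hfε hfε, covariance_self hε.aemeasurable]
  ring

lemma integral_mul_sub_integral_mul_integral {X Y : Ω → ℝ} (hX : MemLp X 2 μ)
    (hY : MemLp Y 2 μ) :
    ∫ ω, X ω * Y ω ∂μ - (∫ ω, X ω ∂μ) * ∫ ω, Y ω ∂μ = cov[X, Y; μ] :=
  (covariance_eq_sub hX hY).symm

end ProbabilityTheory

theorem stmt2_general
    {Ω : Type*} [MeasureSpace Ω] [IsProbabilityMeasure (ℙ : Measure Ω)]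
    (μRV ε₁ ε₂ ε₃ : Ω → ℝ) (α₂ α₃ β₂ β₃ Δ σ2sq σ3sq : ℝ)
    (hβ₂ : β₂ ≠ 0) (hβ₃ : β₃ ≠ 0)
    (hL2 : ∀ i, MemLp (![μRV, ε₁, ε₂, ε₃] i) 2 ℙ)
    (hindep : iIndepFun ![μRV, ε₁, ε₂, ε₃] ℙ)
    (hε₂ : ∫ x, ε₂ x = 0) (hε₃ : ∫ x, ε₃ x = 0)
    (hσ₂ : (∫ x, (ε₂ x) ^ 2) = σ2sq)
    (hσ₃ : (∫ x, (ε₃ x) ^ 2) = σ3sq)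
    (hΔ : (∫ x, (μRV x - ∫ y, μRV y) ^ 2) = Δ)
    (X Y Z : Ω → ℝ)
    (hX : X = fun ω => μRV ω + ε₁ ω)
    (hY : Y = fun ω => α₂ + β₂ * μRV ω + ε₂ ω)
    (hZ : Z = fun ω => α₃ + β₃ * μRV ω + ε₃ ω) :
    σ2sq = (∫ x, (Y x - ∫ y, Y y) ^ 2) -
      ((∫ x, X x * Y x) - (∫ x, X x) * (∫ x, Y x)) *
        ((∫ x, Y x * Z x) - (∫ x, Y x) * (∫ x, Z x)) /
        ((∫ x, X x * Z x) - (∫ x, X x) * (∫ x, Z x)) ∧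
    σ3sq = (∫ x, (Z x - ∫ y, Z y) ^ 2) -
      ((∫ x, Y x * Z x) - (∫ x, Y x) * (∫ x, Z x)) *
        ((∫ x, X x * Z x) - (∫ x, X x) * (∫ x, Z x)) /
        ((∫ x, X x * Y x) - (∫ x, X x) * (∫ x, Y x)) := by
  have hμ : MemLp μRV 2 ℙ := hL2 0
  have h₁ : MemLp ε₁ 2 ℙ := hL2 1
  have h₂ : MemLp ε₂ 2 ℙ := hL2 2
  have h₃ : MemLp ε₃ 2 ℙ := hL2 3
  have h01 : μRV ⟂ᵢ[ℙ] ε₁ := hindep.indepFun (by decide : (0 : Fin 4) ≠ 1)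
  have h02 : μRV ⟂ᵢ[ℙ] ε₂ := hindep.indepFun (by decide : (0 : Fin 4) ≠ 2)
  have h03 : μRV ⟂ᵢ[ℙ] ε₃ := hindep.indepFun (by decide : (0 : Fin 4) ≠ 3)
  have h12 : ε₁ ⟂ᵢ[ℙ] ε₂ := hindep.indepFun (by decide : (1 : Fin 4) ≠ 2)
  have h13 : ε₁ ⟂ᵢ[ℙ] ε₃ := hindep.indepFun (by decide : (1 : Fin 4) ≠ 3)
  have h23 : ε₂ ⟂ᵢ[ℙ] ε₃ := hindep.indepFun (by decide : (2 : Fin 4) ≠ 3)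
  have hX' : X = fun ω ↦ 0 + 1 * μRV ω + ε₁ ω := by simp [hX]
  have hXL2 : MemLp X 2 ℙ := hX' ▸ hμ.const_add_mul_add 0 1 h₁
  have hYL2 : MemLp Y 2 ℙ := hY ▸ hμ.const_add_mul_add α₂ β₂ h₂
  have hZL2 : MemLp Z 2 ℙ := hZ ▸ hμ.const_add_mul_add α₃ β₃ h₃
  have hVarμ : Var[μRV; ℙ] = Δ := (variance_eq_integral hμ.aemeasurable).trans hΔ
  have hVar₂ : Var[ε₂; ℙ] = σ2sq := (variance_of_integral_eq_zero h₂.aemeasurable hε₂).trans hσ₂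
  have hVar₃ : Var[ε₃; ℙ] = σ3sq := (variance_of_integral_eq_zero h₃.aemeasurable hε₃).trans hσ₃
  rw [← variance_eq_integral hYL2.aemeasurable, ← variance_eq_integral hZL2.aemeasurable,
    integral_mul_sub_integral_mul_integral hXL2 hYL2,
    integral_mul_sub_integral_mul_integral hXL2 hZL2,
    integral_mul_sub_integral_mul_integral hYL2 hZL2, hX', hY, hZ,
    covariance_const_add_mul_add_of_indepFun _ _ _ _ hμ h₁ h₂ h01 h02 h12,
    covariance_const_add_mul_add_of_indepFun _ _ _ _ hμ h₁ h₃ h01 h03 h13,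
    covariance_const_add_mul_add_of_indepFun _ _ _ _ hμ h₂ h₃ h02 h03 h23,
    variance_const_add_mul_add _ _ hμ h₂ h02, variance_const_add_mul_add _ _ hμ h₃ h03,
    hVarμ, hVar₂, hVar₃]
  constructor <;> field_simp <;> ring

/-- in the structural ME system of order 3, the error variances of
the second and third instruments satisfy
σ₂² = Var(Y) − Cov(X,Y)·Cov(Y,Z)/Cov(X,Z) and
σ₃² = Var(Z) − Cov(Y,Z)·Cov(X,Z)/Cov(X,Y), provided β₂, β₃ ≠ 0 and Var(μ) > 0. -/
theorem stmt2
    {Ω : Type*} [MeasureSpace Ω] [IsProbabilityMeasure (ℙ : Measure Ω)]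
    (μRV ε₁ ε₂ ε₃ : Ω → ℝ) (α₂ α₃ β₂ β₃ Δ σ1sq σ2sq σ3sq : ℝ)
    (hβ₂ : β₂ ≠ 0) (hβ₃ : β₃ ≠ 0)
    (hmeas : ∀ i, Measurable (![μRV, ε₁, ε₂, ε₃] i))
    (hL2 : ∀ i, MemLp (![μRV, ε₁, ε₂, ε₃] i) 2 ℙ)
    (hindep : iIndepFun ![μRV, ε₁, ε₂, ε₃] ℙ)
    (hε₁ : ∫ x, ε₁ x = 0) (hε₂ : ∫ x, ε₂ x = 0) (hε₃ : ∫ x, ε₃ x = 0)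
    (hσ₁ : (∫ x, (ε₁ x) ^ 2) = σ1sq)
    (hσ₂ : (∫ x, (ε₂ x) ^ 2) = σ2sq)
    (hσ₃ : (∫ x, (ε₃ x) ^ 2) = σ3sq)
    (hΔ : (∫ x, (μRV x - ∫ y, μRV y) ^ 2) = Δ) (hΔpos : 0 < Δ)
    (X Y Z : Ω → ℝ)
    (hX : X = fun ω => μRV ω + ε₁ ω)
    (hY : Y = fun ω => α₂ + β₂ * μRV ω + ε₂ ω)
    (hZ : Z = fun ω => α₃ + β₃ * μRV ω + ε₃ ω) :
    σ2sq = (∫ x, (Y x - ∫ y, Y y) ^ 2) -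
      ((∫ x, X x * Y x) - (∫ x, X x) * (∫ x, Y x)) *
        ((∫ x, Y x * Z x) - (∫ x, Y x) * (∫ x, Z x)) /
        ((∫ x, X x * Z x) - (∫ x, X x) * (∫ x, Z x)) ∧
    σ3sq = (∫ x, (Z x - ∫ y, Z y) ^ 2) -
      ((∫ x, Y x * Z x) - (∫ x, Y x) * (∫ x, Z x)) *
        ((∫ x, X x * Z x) - (∫ x, X x) * (∫ x, Z x)) /
        ((∫ x, X x * Y x) - (∫ x, X x) * (∫ x, Y x)) :=
  stmt2_general μRV ε₁ ε₂ ε₃ α₂ α₃ β₂ β₃ Δ σ2sq σ3sq hβ₂ hβ₃ hL2 hindep hε₂ hε₃ hσ₂ hσ₃ hΔ X Y Z hX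
    hY hZ
end

section
/- Under the functional ME system with limits μ̄ and Δ > 0 as in Proposition 1, the estimator β̂_2 = S_yz/S_xz converges in probability to β_2 as n → ∞, where S_yz and S_xz are the sample covariances of (Y_j, Z_j) and (X_j, Z_j). -/
/-!
Centering `μ_j` at `μ̄`, bilinearity of the sample covariance gives
`S_yz = β₂ β₃ S_cc + β₂ S_{c,ε₃} + β₃ S_{c,ε₂} + S_{ε₂,ε₃}` with `c_j = μ_j - μ̄`, and likewise
for `S_xz` with `1, ε₁` in place of `β₂, ε₂`. The term `S_cc` tends to `Δ` deterministically;
every other term is built from sample means of pairwise independent, centred, square-integrable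
variables (`ε_j`, `c_j ε_j`, `ε_{1j} ε_{3j}`, `ε_{2j} ε_{3j}`) whose variances sum to `o(n²)`, so
these means tend to `0` in probability by Chebyshev's inequality. Hence `S_yz → β₂ β₃ Δ` and
`S_xz → β₃ Δ ≠ 0` in probability, and the quotient follows because convergence in probability to
constants is preserved by maps continuous at the limit.
-/

open MeasureTheory ProbabilityTheory Filter Finset Topology

namespace MeasureTheory

variable {ι Ω E F : Type*} [MeasurableSpace Ω] {μ : Measure Ω} {l : Filter ι}
  [PseudoMetricSpace E] [PseudoMetricSpace F]

theorem TendstoInMeasure.comp_continuousAt {f : ι → Ω → E} {c : E} {g : E → F}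
    (hf : TendstoInMeasure μ f l fun _ => c) (hg : ContinuousAt g c) :
    TendstoInMeasure μ (fun i ω => g (f i ω)) l fun _ => g c := by
  rw [tendstoInMeasure_iff_dist] at hf ⊢
  intro ε hε
  obtain ⟨δ, hδ, hgδ⟩ := Metric.continuousAt_iff.1 hg ε hε
  refine tendsto_of_tendsto_of_tendsto_of_le_of_le tendsto_const_nhds (hf δ hδ)
    (fun _ => zero_le) fun i => measure_mono fun ω hω => ?_
  by_contra h
  exact (not_le.2 (hgδ (not_le.1 h))) hω

theorem TendstoInMeasure.prodMk {f : ι → Ω → E} {g : ι → Ω → F} {f' : Ω → E} {g' : Ω → F}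
    (hf : TendstoInMeasure μ f l f') (hg : TendstoInMeasure μ g l g') :
    TendstoInMeasure μ (fun i ω => (f i ω, g i ω)) l fun ω => (f' ω, g' ω) := by
  rw [tendstoInMeasure_iff_dist] at hf hg ⊢
  intro ε hε
  refine tendsto_of_tendsto_of_tendsto_of_le_of_le tendsto_const_nhds
    (by simpa using (hf ε hε).add (hg ε hε)) (fun _ => zero_le) fun i => ?_
  refine (measure_mono fun ω hω => ?_).trans (measure_union_le _ _)
  simpa [Prod.dist_eq, le_max_iff] using hω

theorem _root_.Filter.Tendsto.tendstoInMeasure {a : ι → E} {c : E} (ha : Tendsto a l (𝓝 c)) :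
    TendstoInMeasure μ (fun i _ => a i) l fun _ => c := by
  rw [tendstoInMeasure_iff_dist]
  intro ε hε
  refine tendsto_const_nhds.congr' ?_
  filter_upwards [Metric.tendsto_nhds.1 ha ε hε] with i hi
  simp [not_le.2 hi]

variable {f g : ι → Ω → ℝ} {a b : ℝ}

theorem TendstoInMeasure.add (hf : TendstoInMeasure μ f l fun _ => a)
    (hg : TendstoInMeasure μ g l fun _ => b) :
    TendstoInMeasure μ (fun i ω => f i ω + g i ω) l fun _ => a + b :=
  (hf.prodMk hg).comp_continuousAt (g := fun p : ℝ × ℝ => p.1 + p.2) (by fun_prop)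

theorem TendstoInMeasure.sub (hf : TendstoInMeasure μ f l fun _ => a)
    (hg : TendstoInMeasure μ g l fun _ => b) :
    TendstoInMeasure μ (fun i ω => f i ω - g i ω) l fun _ => a - b :=
  (hf.prodMk hg).comp_continuousAt (g := fun p : ℝ × ℝ => p.1 - p.2) (by fun_prop)

theorem TendstoInMeasure.mul (hf : TendstoInMeasure μ f l fun _ => a)
    (hg : TendstoInMeasure μ g l fun _ => b) :
    TendstoInMeasure μ (fun i ω => f i ω * g i ω) l fun _ => a * b :=
  (hf.prodMk hg).comp_continuousAt (g := fun p : ℝ × ℝ => p.1 * p.2) (by fun_prop)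

theorem TendstoInMeasure.div (hf : TendstoInMeasure μ f l fun _ => a)
    (hg : TendstoInMeasure μ g l fun _ => b) (hb : b ≠ 0) :
    TendstoInMeasure μ (fun i ω => f i ω / g i ω) l fun _ => a / b :=
  (hf.prodMk hg).comp_continuousAt (g := fun p : ℝ × ℝ => p.1 / p.2)
    (continuousAt_fst.div continuousAt_snd hb)

theorem TendstoInMeasure.const_mul (hf : TendstoInMeasure μ f l fun _ => a) (c : ℝ) :
    TendstoInMeasure μ (fun i ω => c * f i ω) l fun _ => c * a :=
  hf.comp_continuousAt (continuous_const_mul c).continuousAt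

end MeasureTheory

section IndependentProduct

variable {Ω : Type*} [MeasurableSpace Ω] {μ : Measure Ω} {X Y : Ω → ℝ}

theorem ProbabilityTheory.IndepFun.memLp_two_mul (h : IndepFun X Y μ) (hX : MemLp X 2 μ)
    (hY : MemLp Y 2 μ) : MemLp (X * Y) 2 μ := by
  refine (memLp_two_iff_integrable_sq (hX.1.mul hY.1)).2 ?_
  have hsq := (h.comp (measurable_id.pow_const 2) (measurable_id.pow_const 2)).integrable_mul
    hX.integrable_sq hY.integrable_sq
  exact hsq.congr (ae_of_all _ fun ω => by simp [mul_pow])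

theorem ProbabilityTheory.IndepFun.variance_mul [IsProbabilityMeasure μ] (h : IndepFun X Y μ)
    (hX : MemLp X 2 μ) (hY : MemLp Y 2 μ) :
    Var[X * Y; μ] = Var[X; μ] * Var[Y; μ] + Var[X; μ] * μ[Y] ^ 2 + Var[Y; μ] * μ[X] ^ 2 := by
  have hsq : μ[(X * Y) ^ 2] = μ[X ^ 2] * μ[Y ^ 2] := by
    rw [mul_pow]
    exact (h.comp (measurable_id.pow_const 2) (measurable_id.pow_const 2))
      |>.integral_mul_eq_mul_integral hX.integrable_sq.1 hY.integrable_sq.1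
  have hmul : μ[X * Y] = μ[X] * μ[Y] := h.integral_mul_eq_mul_integral hX.1 hY.1
  rw [variance_eq_sub (h.memLp_two_mul hX hY), variance_eq_sub hX, variance_eq_sub hY, hsq, hmul]
  ring

end IndependentProduct

-- Both are `0` at `n = 0` (`x / 0 = 0`), where `sampleCov_eq_sub` and `sampleCov_affine` hold too.
noncomputable def sampleMean (n : ℕ) (a : ℕ → ℝ) : ℝ := (∑ j ∈ range n, a j) / n

noncomputable def sampleCov (n : ℕ) (a b : ℕ → ℝ) : ℝ :=
  (∑ j ∈ range n, (a j - sampleMean n a) * (b j - sampleMean n b)) / n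

section SampleStatistics

variable {n : ℕ} {a b c e f : ℕ → ℝ}

theorem sampleMean_affine (hn : n ≠ 0) (α β : ℝ) :
    sampleMean n (fun j => α + β * c j + e j) = α + β * sampleMean n c + sampleMean n e := by
  simp only [sampleMean, sum_add_distrib, ← mul_sum, sum_const, card_range, nsmul_eq_mul]
  field_simp

theorem sampleCov_eq_sub (n : ℕ) (a b : ℕ → ℝ) :
    sampleCov n a b = sampleMean n (fun j => a j * b j) - sampleMean n a * sampleMean n b := by
  rcases eq_or_ne n 0 with rfl | hn
  · simp [sampleCov, sampleMean]
  have h : ∀ j, (a j - sampleMean n a) * (b j - sampleMean n b) =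
      a j * b j - sampleMean n b * a j - sampleMean n a * b j + sampleMean n a * sampleMean n b :=
    fun j => by ring
  simp only [sampleCov, h, sum_add_distrib, sum_sub_distrib, ← mul_sum, sum_const, card_range,
    nsmul_eq_mul]
  simp only [sampleMean]
  field_simp
  ring

theorem sampleCov_affine (n : ℕ) (α β α' β' : ℝ) :
    sampleCov n (fun j => α + β * c j + e j) (fun j => α' + β' * c j + f j) =
      β * β' * sampleCov n c c + β * sampleCov n c f + β' * sampleCov n c e + sampleCov n e f := by
  rcases eq_or_ne n 0 with rfl | hn
  · simp [sampleCov]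
  have h : ∀ j, (α + β * c j + e j - sampleMean n fun j => α + β * c j + e j) *
      (α' + β' * c j + f j - sampleMean n fun j => α' + β' * c j + f j) =
      β * β' * ((c j - sampleMean n c) * (c j - sampleMean n c)) +
        β * ((c j - sampleMean n c) * (f j - sampleMean n f)) +
        β' * ((c j - sampleMean n c) * (e j - sampleMean n e)) +
        (e j - sampleMean n e) * (f j - sampleMean n f) := fun j => by
    rw [sampleMean_affine hn, sampleMean_affine hn]; ring
  simp only [sampleCov, h, sum_add_distrib, ← mul_sum, add_div, mul_div_assoc]

end SampleStatistics

section WeakLaw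

variable {Ω : Type*} [MeasurableSpace Ω] {μ : Measure Ω} [IsProbabilityMeasure μ]

theorem tendstoInMeasure_sampleMean_of_variance {ξ : ℕ → Ω → ℝ} (hL2 : ∀ j, MemLp (ξ j) 2 μ)
    (hmean : ∀ j, μ[ξ j] = 0) (hind : Pairwise fun i j => IndepFun (ξ i) (ξ j) μ)
    (hvar : Tendsto (fun n : ℕ => (∑ j ∈ range n, Var[ξ j; μ]) / n ^ 2) atTop (𝓝 0)) :
    TendstoInMeasure μ (fun n ω => sampleMean n (ξ · ω)) atTop fun _ => 0 := by
  rw [tendstoInMeasure_iff_dist]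
  intro ε hε
  have chebyshev (n : ℕ) : μ {ω | ε ≤ dist (sampleMean n (ξ · ω)) 0} ≤
      ENNReal.ofReal ((∑ j ∈ range n, Var[ξ j; μ]) / n ^ 2 / ε ^ 2) := by
    have hS (ω : Ω) : sampleMean n (ξ · ω) = (n : ℝ)⁻¹ * (∑ j ∈ range n, ξ j) ω := by
      simp [sampleMean, Finset.sum_apply, div_eq_inv_mul]
    have hL2S : MemLp (∑ j ∈ range n, ξ j) 2 μ := memLp_finsetSum' _ fun j _ => hL2 j
    have hmeanS : μ[fun ω => (n : ℝ)⁻¹ * (∑ j ∈ range n, ξ j) ω] = 0 := by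
      simp [integral_const_mul, Finset.sum_apply,
        integral_finsetSum _ fun j _ => (hL2 j).integrable one_le_two, hmean]
    have hvarS : Var[fun ω => (n : ℝ)⁻¹ * (∑ j ∈ range n, ξ j) ω; μ] =
        (∑ j ∈ range n, Var[ξ j; μ]) / n ^ 2 := by
      rw [variance_const_mul, IndepFun.variance_sum (fun j _ => hL2 j)
        fun i _ j _ hij => hind hij]
      ring
    have := meas_ge_le_variance_div_sq (hL2S.const_mul (n : ℝ)⁻¹) hε
    simpa only [hS, hmeanS, hvarS, Real.dist_eq] using this
  have hbound : Tendsto (fun n : ℕ =>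
      ENNReal.ofReal ((∑ j ∈ range n, Var[ξ j; μ]) / n ^ 2 / ε ^ 2)) atTop (𝓝 0) := by
    simpa using ENNReal.tendsto_ofReal (hvar.div_const (ε ^ 2))
  exact tendsto_of_tendsto_of_tendsto_of_le_of_le tendsto_const_nhds hbound
    (fun _ => zero_le) chebyshev

theorem tendstoInMeasure_sampleMean_mul {ξ : ℕ → Ω → ℝ} {w : ℕ → ℝ} {s S : ℝ}
    (hL2 : ∀ j, MemLp (ξ j) 2 μ) (hmean : ∀ j, μ[ξ j] = 0)
    (hind : Pairwise fun i j => IndepFun (ξ i) (ξ j) μ) (hvar : ∀ j, Var[ξ j; μ] = s)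
    (hw : Tendsto (fun n => sampleMean n fun j => w j ^ 2) atTop (𝓝 S)) :
    TendstoInMeasure μ (fun n ω => sampleMean n fun j => w j * ξ j ω) atTop fun _ => 0 := by
  refine tendstoInMeasure_sampleMean_of_variance (ξ := fun j ω => w j * ξ j ω)
    (fun j => (hL2 j).const_mul _) (fun j => by simp [integral_const_mul, hmean])
    (fun i j hij => (hind hij).comp (measurable_const_mul _) (measurable_const_mul _)) ?_
  have h (n : ℕ) : (∑ j ∈ range n, Var[fun ω => w j * ξ j ω; μ]) / n ^ 2 =
      s * sampleMean n (fun j => w j ^ 2) * (n : ℝ)⁻¹ := by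
    simp only [variance_const_mul, hvar, ← sum_mul, sampleMean]
    ring
  simpa [h] using (hw.const_mul s).mul tendsto_inv_atTop_nhds_zero_nat

theorem tendsto_sampleMean_const (a : ℝ) :
    Tendsto (fun n => sampleMean n fun _ => a) atTop (𝓝 a) := by
  refine tendsto_const_nhds.congr' ?_
  filter_upwards [eventually_ne_atTop 0] with n hn
  simp [sampleMean, hn]

theorem tendstoInMeasure_sampleMean {ξ : ℕ → Ω → ℝ} {s : ℝ}
    (hL2 : ∀ j, MemLp (ξ j) 2 μ) (hmean : ∀ j, μ[ξ j] = 0)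
    (hind : Pairwise fun i j => IndepFun (ξ i) (ξ j) μ) (hvar : ∀ j, Var[ξ j; μ] = s) :
    TendstoInMeasure μ (fun n ω => sampleMean n (ξ · ω)) atTop fun _ => 0 := by
  simpa only [one_mul] using tendstoInMeasure_sampleMean_mul (w := fun _ => 1) hL2 hmean hind hvar
    (by simpa only [one_pow] using tendsto_sampleMean_const 1)

end WeakLaw

section SampleCovariance

variable {Ω : Type*} [MeasurableSpace Ω] {μ : Measure Ω}

theorem tendstoInMeasure_sampleCov {l : Filter ℕ} {a b : ℕ → Ω → ℝ} {p q r : ℝ}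
    (hab : TendstoInMeasure μ (fun n ω => sampleMean n fun j => a j ω * b j ω) l fun _ => p)
    (ha : TendstoInMeasure μ (fun n ω => sampleMean n (a · ω)) l fun _ => q)
    (hb : TendstoInMeasure μ (fun n ω => sampleMean n (b · ω)) l fun _ => r) :
    TendstoInMeasure μ (fun n ω => sampleCov n (a · ω) (b · ω)) l fun _ => p - q * r := by
  simpa only [sampleCov_eq_sub] using hab.sub (ha.mul hb)

theorem tendstoInMeasure_sampleCov_of_affine {m : ℕ → ℝ} {μbar Δ α β α' β' : ℝ}
    {a b e f : ℕ → Ω → ℝ}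
    (ha : ∀ j ω, a j ω = α + β * m j + e j ω) (hb : ∀ j ω, b j ω = α' + β' * m j + f j ω)
    (hm : Tendsto (fun n => sampleMean n m) atTop (𝓝 μbar))
    (hΔ : Tendsto (fun n => sampleMean n fun j => (m j - μbar) ^ 2) atTop (𝓝 Δ))
    (he : TendstoInMeasure μ (fun n ω => sampleMean n (e · ω)) atTop fun _ => 0)
    (hf : TendstoInMeasure μ (fun n ω => sampleMean n (f · ω)) atTop fun _ => 0)
    (hme : TendstoInMeasure μ (fun n ω => sampleMean n fun j => (m j - μbar) * e j ω) atTop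
      fun _ => 0)
    (hmf : TendstoInMeasure μ (fun n ω => sampleMean n fun j => (m j - μbar) * f j ω) atTop
      fun _ => 0)
    (hef : TendstoInMeasure μ (fun n ω => sampleMean n fun j => e j ω * f j ω) atTop
      fun _ => 0) :
    TendstoInMeasure μ (fun n ω => sampleCov n (a · ω) (b · ω)) atTop fun _ => β * β' * Δ := by
  set c := fun j => m j - μbar
  have hc : Tendsto (fun n => sampleMean n c) atTop (𝓝 0) := by
    refine ((hm.sub_const μbar).congr' ?_).trans (by rw [sub_self])
    filter_upwards [eventually_ne_atTop 0] with n hn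
    simp only [c, sampleMean, sum_sub_distrib, sum_const, card_range, nsmul_eq_mul]
    field_simp
  have hcc : Tendsto (fun n => sampleCov n c c) atTop (𝓝 Δ) := by
    simpa [sampleCov_eq_sub, sq] using hΔ.sub (hc.mul hc)
  have hsplit (n : ℕ) (ω : Ω) : sampleCov n (a · ω) (b · ω) =
      β * β' * sampleCov n c c + β * sampleCov n c (f · ω) + β' * sampleCov n c (e · ω) +
        sampleCov n (e · ω) (f · ω) := by
    have ha' : (a · ω) = fun j => (α + β * μbar) + β * c j + e j ω := funext fun j => by
      rw [ha]; ring
    have hb' : (b · ω) = fun j => (α' + β' * μbar) + β' * c j + f j ω := funext fun j => by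
      rw [hb]; ring
    rw [ha', hb', sampleCov_affine]
  have hcf := tendstoInMeasure_sampleCov (a := fun j _ => c j) hmf hc.tendstoInMeasure hf
  have hce := tendstoInMeasure_sampleCov (a := fun j _ => c j) hme hc.tendstoInMeasure he
  simp only [hsplit]
  simpa using (((hcc.tendstoInMeasure.const_mul (β * β')).add (hcf.const_mul β)).add
    (hce.const_mul β')).add (tendstoInMeasure_sampleCov hef he hf)

end SampleCovariance

theorem tendstoInMeasure_sampleCov_of_gaussian {Ω : Type*} [MeasurableSpace Ω] {μ : Measure Ω}
    [IsProbabilityMeasure μ] {m : ℕ → ℝ} {μbar Δ α β α' β' : ℝ} {v w : NNReal}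
    {a b e f : ℕ → Ω → ℝ}
    (ha : ∀ j ω, a j ω = α + β * m j + e j ω) (hb : ∀ j ω, b j ω = α' + β' * m j + f j ω)
    (hm : Tendsto (fun n => sampleMean n m) atTop (𝓝 μbar))
    (hΔ : Tendsto (fun n => sampleMean n fun j => (m j - μbar) ^ 2) atTop (𝓝 Δ))
    (he : ∀ j, HasLaw (e j) (gaussianReal 0 v) μ) (hf : ∀ j, HasLaw (f j) (gaussianReal 0 w) μ)
    (hindep_e : Pairwise fun i j => IndepFun (e i) (e j) μ)
    (hindep_f : Pairwise fun i j => IndepFun (f i) (f j) μ)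
    (hindep_ef : Pairwise fun i j => IndepFun (e i * f i) (e j * f j) μ)
    (hef : ∀ j, IndepFun (e j) (f j) μ) :
    TendstoInMeasure μ (fun n ω => sampleCov n (a · ω) (b · ω)) atTop fun _ => β * β' * Δ := by
  have hL2e (j : ℕ) : MemLp (e j) 2 μ := (he j).hasGaussianLaw.memLp_two
  have hL2f (j : ℕ) : MemLp (f j) 2 μ := (hf j).hasGaussianLaw.memLp_two
  have hmean_e (j : ℕ) : μ[e j] = 0 := by simp [(he j).integral_eq]
  have hmean_f (j : ℕ) : μ[f j] = 0 := by simp [(hf j).integral_eq]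
  have hvar_e (j : ℕ) : Var[e j; μ] = v := by simp [(he j).variance_eq]
  have hvar_f (j : ℕ) : Var[f j; μ] = w := by simp [(hf j).variance_eq]
  have hvar_ef (j : ℕ) : Var[e j * f j; μ] = v * w := by
    simp [(hef j).variance_mul (hL2e j) (hL2f j), hvar_e, hvar_f, hmean_e, hmean_f]
  have hmean_ef (j : ℕ) : μ[e j * f j] = 0 := by
    rw [(hef j).integral_mul_eq_mul_integral (hL2e j).1 (hL2f j).1, hmean_e, zero_mul]
  exact tendstoInMeasure_sampleCov_of_affine ha hb hm hΔ
    (tendstoInMeasure_sampleMean hL2e hmean_e hindep_e hvar_e)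
    (tendstoInMeasure_sampleMean hL2f hmean_f hindep_f hvar_f)
    (tendstoInMeasure_sampleMean_mul hL2e hmean_e hindep_e hvar_e hΔ)
    (tendstoInMeasure_sampleMean_mul hL2f hmean_f hindep_f hvar_f hΔ)
    (tendstoInMeasure_sampleMean (fun j => (hef j).memLp_two_mul (hL2e j) (hL2f j))
      hmean_ef hindep_ef hvar_ef)

/-- under the functional ME system (fixed μ_j with empirical mean
→ μ̄ and empirical variance → Δ > 0, i.i.d. error triples with independent
mean-zero Gaussian components of variances σ₁², σ₂², σ₃², β₃ ≠ 0), the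
estimator β̂₂ = S_yz/S_xz of the sample covariances converges in probability
to β₂. -/
theorem stmt12
    {Ω : Type*} [MeasureSpace Ω] [IsProbabilityMeasure (ℙ : Measure Ω)]
    (μseq : ℕ → ℝ) (μbar Δ α₂ α₃ β₂ β₃ : ℝ) (v₁ v₂ v₃ : NNReal)
    (hΔpos : 0 < Δ) (hβ₃ : β₃ ≠ 0)
    (hmean : Tendsto (fun n : ℕ =>
        (∑ j ∈ Finset.range n, μseq j) / (n : ℝ)) atTop (nhds μbar))
    (hvar : Tendsto (fun n : ℕ =>
        (∑ j ∈ Finset.range n, (μseq j - μbar) ^ 2) / (n : ℝ)) atTop (nhds Δ))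
    (ε₁ ε₂ ε₃ : ℕ → Ω → ℝ)
    (hmeas₁ : ∀ j, Measurable (ε₁ j)) (hmeas₂ : ∀ j, Measurable (ε₂ j))
    (hmeas₃ : ∀ j, Measurable (ε₃ j))
    -- error triples independent across j
    (hindep : iIndepFun
      (fun j : ℕ => fun ω => (ε₁ j ω, ε₂ j ω, ε₃ j ω)) ℙ)
    -- within each triple, independent components
    (hindep' : ∀ j, iIndepFun ![ε₁ j, ε₂ j, ε₃ j] ℙ)
    -- mean-zero Gaussian components with variances σ₁², σ₂², σ₃²
    (hg₁ : ∀ j, Measure.map (ε₁ j) ℙ = gaussianReal 0 v₁)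
    (hg₂ : ∀ j, Measure.map (ε₂ j) ℙ = gaussianReal 0 v₂)
    (hg₃ : ∀ j, Measure.map (ε₃ j) ℙ = gaussianReal 0 v₃)
    (X Y Z : ℕ → Ω → ℝ)
    (hX : X = fun j ω => μseq j + ε₁ j ω)
    (hY : Y = fun j ω => α₂ + β₂ * μseq j + ε₂ j ω)
    (hZ : Z = fun j ω => α₃ + β₃ * μseq j + ε₃ j ω)
    -- sample covariances
    (Syz Sxz : ℕ → Ω → ℝ)
    (hSyz : Syz = fun n ω =>
      (∑ j ∈ Finset.range n,
        (Y j ω - (∑ i ∈ Finset.range n, Y i ω) / (n : ℝ)) *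
        (Z j ω - (∑ i ∈ Finset.range n, Z i ω) / (n : ℝ))) / (n : ℝ))
    (hSxz : Sxz = fun n ω =>
      (∑ j ∈ Finset.range n,
        (X j ω - (∑ i ∈ Finset.range n, X i ω) / (n : ℝ)) *
        (Z j ω - (∑ i ∈ Finset.range n, Z i ω) / (n : ℝ))) / (n : ℝ)) :
    TendstoInMeasure ℙ (fun n : ℕ => fun ω => Syz n ω / Sxz n ω)
      atTop (fun _ => β₂) := by
  have law₁ (j : ℕ) : HasLaw (ε₁ j) (gaussianReal 0 v₁) ℙ := ⟨(hmeas₁ j).aemeasurable, hg₁ j⟩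
  have law₂ (j : ℕ) : HasLaw (ε₂ j) (gaussianReal 0 v₂) ℙ := ⟨(hmeas₂ j).aemeasurable, hg₂ j⟩
  have law₃ (j : ℕ) : HasLaw (ε₃ j) (gaussianReal 0 v₃) ℙ := ⟨(hmeas₃ j).aemeasurable, hg₃ j⟩
  have hcomp {φ : ℝ × ℝ × ℝ → ℝ} (hφ : Measurable φ) : Pairwise fun i j =>
      IndepFun (fun ω => φ (ε₁ i ω, ε₂ i ω, ε₃ i ω)) (fun ω => φ (ε₁ j ω, ε₂ j ω, ε₃ j ω)) ℙ :=
    fun i j hij => (hindep.indepFun hij).comp hφ hφ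
  have hYZ := tendstoInMeasure_sampleCov_of_gaussian (a := Y) (b := Z) (α := α₂) (β := β₂)
    (α' := α₃) (β' := β₃) (by simp [hY]) (by simp [hZ]) hmean hvar law₂ law₃
    (hcomp (φ := fun p => p.2.1) (by fun_prop)) (hcomp (φ := fun p => p.2.2) (by fun_prop))
    (hcomp (φ := fun p => p.2.1 * p.2.2) (by fun_prop))
    fun j => (hindep' j).indepFun (show (1 : Fin 3) ≠ 2 by decide)
  have hXZ := tendstoInMeasure_sampleCov_of_gaussian (a := X) (b := Z) (α := 0) (β := 1)
    (α' := α₃) (β' := β₃) (by simp [hX]) (by simp [hZ]) hmean hvar law₁ law₃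
    (hcomp (φ := fun p => p.1) (by fun_prop)) (hcomp (φ := fun p => p.2.2) (by fun_prop))
    (hcomp (φ := fun p => p.1 * p.2.2) (by fun_prop))
    fun j => (hindep' j).indepFun (show (0 : Fin 3) ≠ 2 by decide)
  have hΔ : 1 * β₃ * Δ ≠ 0 := by simpa using mul_ne_zero hβ₃ hΔpos.ne'
  have hlimit : β₂ * β₃ * Δ / (1 * β₃ * Δ) = β₂ := by field_simp
  subst hSyz hSxz
  rw [← hlimit]
  exact hYZ.div hXZ hΔ
end
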